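/- Logarithmic Gronwall inequality: suppose X, Y, A, B : [0,T] → ℝ are nonnegative functions with X differentiable, satisfying X'(t) + Y(t) ≤ A(t)X(t) + B(t)X(t)·log(1 + Y(t)) for all t ∈ [0,T], with A ∈ L¹(0,T) and B ∈ L²(0,T). Then for all t ∈ [0,T], X(t) ≤ (1 + X(0))^{exp(∫₀ᵗ B)} · exp(∫₀ᵗ exp(∫ₛᵗ B)·(A(s) + B(s)²) ds). -/

import Mathlib

open MeasureTheory Set Nat


lemma log_key (b y : ℝ) (hb : 0 ≤ b) (hy : 0 ≤ y) :
    b * Real.log (1 + y) ≤ y + b * Real.log (1 + b) := by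
  rcases le_total y b with h | h
  · have h1 : Real.log (1 + y) ≤ Real.log (1 + b) :=
      Real.log_le_log (by linarith) (by linarith)
    nlinarith [Real.log_nonneg (by linarith : (1:ℝ) ≤ 1 + y)]
  · have hb1 : (0:ℝ) < 1 + b := by linarith
    have hy1 : (0:ℝ) < 1 + y := by linarith
    have h2 : Real.log (1 + y) - Real.log (1 + b) = Real.log ((1 + y) / (1 + b)) :=
      (Real.log_div (ne_of_gt hy1) (ne_of_gt hb1)).symm
    have h3 : Real.log ((1 + y) / (1 + b)) ≤ (1 + y) / (1 + b) - 1 :=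
      Real.log_le_sub_one_of_pos (by positivity)
    have h4 : (1 + y) / (1 + b) - 1 = (y - b) / (1 + b) := by field_simp; ring
    have h5 : b * ((y - b) / (1 + b)) ≤ y - b := by
      rw [mul_div_assoc']
      rw [div_le_iff₀ hb1]
      nlinarith
    nlinarith [h3, h2]


lemma swap_tri (t : ℝ) (f g : ℝ → ℝ) (hf : IntegrableOn f (Ioc 0 t))
    (hg : IntegrableOn g (Ioc 0 t)) :
    ∫ s in Ioc (0:ℝ) t, f s * ∫ τ in Ioc (0:ℝ) s, g τ
      = ∫ τ in Ioc (0:ℝ) t, g τ * ∫ s in Ioc τ t, f s := by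
  set μ := volume.restrict (Ioc (0:ℝ) t) with hμ
  have hmeas : MeasurableSet {p : ℝ × ℝ | p.2 ≤ p.1} :=
    measurableSet_le measurable_snd measurable_fst
  set F : ℝ × ℝ → ℝ := {p : ℝ × ℝ | p.2 ≤ p.1}.indicator (fun p => f p.1 * g p.2) with hF
  have hFint : Integrable F (μ.prod μ) :=
    (Integrable.mul_prod hf hg).indicator hmeas
  have h1 : ∀ s ∈ Ioc (0:ℝ) t, (∫ τ, F (s, τ) ∂μ) = f s * ∫ τ in Ioc (0:ℝ) s, g τ := by
    intro s hs
    have e1 : ∫ τ, F (s, τ) ∂μ = ∫ τ in Ioc (0:ℝ) t, f s * (Iic s).indicator g τ := by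
      apply integral_congr_ae
      filter_upwards with τ
      by_cases hτ : τ ≤ s <;> simp [F, Set.indicator_apply, hτ]
    rw [e1, integral_const_mul]
    congr 1
    rw [setIntegral_indicator measurableSet_Iic, Ioc_inter_Iic, min_eq_right hs.2]
  have h2 : ∀ τ ∈ Ioc (0:ℝ) t, (∫ s, F (s, τ) ∂μ) = g τ * ∫ s in Ioc τ t, f s := by
    intro τ hτ
    have e1 : ∫ s, F (s, τ) ∂μ = ∫ s in Ioc (0:ℝ) t, g τ * (Ici τ).indicator f s := by
      apply integral_congr_ae
      filter_upwards with s
      by_cases hs : τ ≤ s <;> simp [F, Set.indicator_apply, hs, mul_comm]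
    rw [e1, integral_const_mul]
    congr 1
    rw [setIntegral_indicator measurableSet_Ici]
    have hset : Ioc (0:ℝ) t ∩ Ici τ = Icc τ t := by
      ext x; simp only [mem_inter_iff, mem_Ioc, mem_Ici, mem_Icc]
      constructor
      · rintro ⟨⟨_, hx2⟩, hx3⟩; exact ⟨hx3, hx2⟩
      · rintro ⟨hx1, hx2⟩; exact ⟨⟨lt_of_lt_of_le hτ.1 hx1, hx2⟩, hx1⟩
    rw [hset, integral_Icc_eq_integral_Ioc]
  have swap := integral_integral_swap (f := fun s τ => F (s, τ)) (μ := μ) (ν := μ) hFint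
  calc ∫ s in Ioc (0:ℝ) t, f s * ∫ τ in Ioc (0:ℝ) s, g τ
      = ∫ s, (∫ τ, F (s, τ) ∂μ) ∂μ := by
        refine (integral_congr_ae ?_).symm
        filter_upwards [ae_restrict_mem measurableSet_Ioc] with s hs
        exact h1 s hs
    _ = ∫ τ, (∫ s, F (s, τ) ∂μ) ∂μ := swap
    _ = ∫ τ in Ioc (0:ℝ) t, g τ * ∫ s in Ioc τ t, f s := by
        apply integral_congr_ae
        filter_upwards [ae_restrict_mem measurableSet_Ioc] with τ hτ
        exact h2 τ hτ



section
variable {B : ℝ → ℝ} {T : ℝ}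

lemma ioc_add (hB : IntegrableOn B (Ioc 0 T)) {a b c : ℝ} (h0 : 0 ≤ a) (hab : a ≤ b)
    (hbc : b ≤ c) (hcT : c ≤ T) :
    ∫ s in Ioc a c, B s = (∫ s in Ioc a b, B s) + ∫ s in Ioc b c, B s := by
  rw [← Ioc_union_Ioc_eq_Ioc hab hbc]
  exact setIntegral_union (Ioc_disjoint_Ioc_of_le le_rfl) measurableSet_Ioc
    (hB.mono_set (Ioc_subset_Ioc h0 (hbc.trans hcT)))
    (hB.mono_set (Ioc_subset_Ioc (h0.trans hab) hcT))

lemma u_nonneg (hBnn : ∀ s ∈ Ioc 0 T, 0 ≤ B s) {s : ℝ} (hs : s ∈ Icc (0:ℝ) T) :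
    0 ≤ ∫ τ in Ioc (0:ℝ) s, B τ :=
  setIntegral_nonneg measurableSet_Ioc fun τ hτ =>
    hBnn τ (Ioc_subset_Ioc le_rfl hs.2 hτ)

lemma u_bound (hB : IntegrableOn B (Ioc 0 T)) {s : ℝ} (hs : s ∈ Icc (0:ℝ) T) :
    |∫ τ in Ioc (0:ℝ) s, B τ| ≤ ∫ τ in Ioc (0:ℝ) T, |B τ| := by
  calc |∫ τ in Ioc (0:ℝ) s, B τ| ≤ ∫ τ in Ioc (0:ℝ) s, |B τ| := by
        simpa [Real.norm_eq_abs] using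
          norm_integral_le_integral_norm (μ := volume.restrict (Ioc (0:ℝ) s)) B
    _ ≤ ∫ τ in Ioc (0:ℝ) T, |B τ| := by
        apply setIntegral_mono_set hB.abs
        · filter_upwards with x using abs_nonneg _
        · exact HasSubset.Subset.eventuallyLE (Ioc_subset_Ioc le_rfl hs.2)

lemma u_contOn (hB : IntegrableOn B (Ioc 0 T)) :
    ContinuousOn (fun s => ∫ τ in Ioc (0:ℝ) s, B τ) (Icc 0 T) := by
  apply intervalIntegral.continuousOn_primitive
  rwa [integrableOn_Icc_iff_integrableOn_Ioc]

lemma u_aesm (hB : IntegrableOn B (Ioc 0 T)) {t : ℝ} (ht : t ∈ Icc (0:ℝ) T) :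
    AEStronglyMeasurable (fun s => ∫ τ in Ioc (0:ℝ) s, B τ)
      (volume.restrict (Ioc 0 t)) :=
  ((u_contOn hB).mono (fun x hx => ⟨le_of_lt hx.1, hx.2.trans ht.2⟩)).aestronglyMeasurable
    measurableSet_Ioc

lemma Bun_int (hB : IntegrableOn B (Ioc 0 T)) (n : ℕ) {t : ℝ} (ht : t ∈ Icc (0:ℝ) T) :
    IntegrableOn (fun s => B s * (∫ τ in Ioc (0:ℝ) s, B τ) ^ n) (Ioc 0 t) := by
  set C := ∫ τ in Ioc (0:ℝ) T, |B τ| with hC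
  have hC0 : 0 ≤ C := setIntegral_nonneg measurableSet_Ioc fun τ _ => abs_nonneg _
  have hBt : IntegrableOn B (Ioc 0 t) := hB.mono_set (Ioc_subset_Ioc le_rfl ht.2)
  apply Integrable.mono' (g := fun s => |B s| * C ^ n)
  · exact hBt.abs.mul_const _
  · exact hBt.aestronglyMeasurable.mul ((u_aesm hB ht).pow _)
  · filter_upwards [ae_restrict_mem measurableSet_Ioc] with s hs
    have hsI : s ∈ Icc (0:ℝ) T := ⟨le_of_lt hs.1, hs.2.trans ht.2⟩
    rw [Real.norm_eq_abs, abs_mul, abs_pow]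
    have := u_bound hB hsI
    have h2 : |∫ τ in Ioc (0:ℝ) s, B τ| ^ n ≤ C ^ n := pow_le_pow_left₀ (abs_nonneg _) this n
    calc |B s| * |∫ τ in Ioc (0:ℝ) s, B τ| ^ n ≤ |B s| * C ^ n := by
          apply mul_le_mul_of_nonneg_left h2 (abs_nonneg _)
      _ = |B s| * C ^ n := rfl
end

section
variable {B : ℝ → ℝ} {T : ℝ}

lemma In_eq (hB : IntegrableOn B (Ioc 0 T)) (hBnn : ∀ s ∈ Ioc 0 T, 0 ≤ B s) :
    ∀ n : ℕ, ∀ t ∈ Icc (0:ℝ) T,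
      ∫ s in Ioc (0:ℝ) t, B s * (∫ τ in Ioc (0:ℝ) s, B τ) ^ n
        = (∫ s in Ioc (0:ℝ) t, B s) ^ (n + 1) / (n + 1) := by
  intro n
  induction n with
  | zero =>
    intro t ht
    simp
  | succ n IH =>
    intro t ht
    set u : ℝ → ℝ := fun s => ∫ τ in Ioc (0:ℝ) s, B τ with hu
    set L := ∫ s in Ioc (0:ℝ) t, B s * u s ^ (n + 1) with hL
    have hBt : IntegrableOn B (Ioc 0 t) := hB.mono_set (Ioc_subset_Ioc le_rfl ht.2)
    have hg : IntegrableOn (fun τ => B τ * u τ ^ n) (Ioc 0 t) := Bun_int hB n ht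
    have hg1 : IntegrableOn (fun τ => B τ * u τ ^ (n + 1)) (Ioc 0 t) := Bun_int hB (n+1) ht
    have step1 : L = (n + 1 : ℝ) * ∫ s in Ioc (0:ℝ) t, B s * ∫ τ in Ioc (0:ℝ) s, B τ * u τ ^ n := by
      rw [← integral_const_mul]
      apply setIntegral_congr_fun measurableSet_Ioc
      intro s hs
      have hsI : s ∈ Icc (0:ℝ) T := ⟨le_of_lt hs.1, hs.2.trans ht.2⟩
      have h := IH s hsI
      simp only [hu]
      rw [h]
      have hn1 : (n + 1 : ℝ) ≠ 0 := by positivity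
      field_simp
    have step2 : (∫ s in Ioc (0:ℝ) t, B s * ∫ τ in Ioc (0:ℝ) s, B τ * u τ ^ n)
        = ∫ τ in Ioc (0:ℝ) t, (B τ * u τ ^ n) * ∫ s in Ioc τ t, B s :=
      swap_tri t B (fun τ => B τ * u τ ^ n) hBt hg
    have step3 : (∫ τ in Ioc (0:ℝ) t, (B τ * u τ ^ n) * ∫ s in Ioc τ t, B s)
        = u t * (u t ^ (n+1) / (n+1)) - L := by
      have e1 : ∀ τ ∈ Ioc (0:ℝ) t, (B τ * u τ ^ n) * (∫ s in Ioc τ t, B s)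
          = u t * (B τ * u τ ^ n) - B τ * u τ ^ (n+1) := by
        intro τ hτ
        have : ∫ s in Ioc τ t, B s = u t - u τ := by
          have := ioc_add hB (le_refl (0:ℝ)) (le_of_lt hτ.1) hτ.2 ht.2
          simp only [hu]
          linarith
        rw [this]; ring
      rw [setIntegral_congr_fun measurableSet_Ioc e1, integral_sub ((hg.const_mul _)) hg1,
        integral_const_mul, IH t ht]
    have hfin : L = (n+1 : ℝ) * (u t * (u t ^ (n+1) / (n+1)) - L) :=
      step1.trans (by rw [step2, step3])
    have hn1 : (n + 1 : ℝ) ≠ 0 := by positivity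
    have e2 : (n+1 : ℝ) * (u t * (u t ^ (n+1) / (n+1))) = u t ^ (n+2) := by
      field_simp; ring
    have hx : ((n:ℝ) + 2) * L = u t ^ (n + 2) := by
      have : L = (n+1:ℝ) * (u t * (u t ^ (n+1) / (n+1))) - (n+1:ℝ) * L := by
        linear_combination hfin
      rw [e2] at this
      linarith
    push_cast
    rw [eq_div_iff (by positivity : ((n:ℝ)+1+1) ≠ 0)]
    rw [show (∫ s in Ioc (0:ℝ) t, B s) = u t from rfl, show n+1+1 = n+2 from rfl]
    linarith
end

section
variable {B : ℝ → ℝ} {T : ℝ}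

lemma exp_tsum (x : ℝ) : Real.exp x = ∑' n : ℕ, x ^ n / n ! := by
  rw [Real.exp_eq_exp_ℝ, NormedSpace.exp_eq_tsum_div]

lemma exp_tsum_shift (x : ℝ) : ∑' n : ℕ, x ^ (n+1) / (Nat.factorial (n+1) : ℝ) = Real.exp x - 1 := by
  have hs : Summable (fun n : ℕ => x ^ n / n !) := Real.summable_pow_div_factorial x
  have := Summable.tsum_eq_zero_add hs
  rw [← exp_tsum] at this
  simp only [pow_zero, Nat.factorial_zero, Nat.cast_one, div_one] at this
  linarith [this]

lemma I1_eq (hB : IntegrableOn B (Ioc 0 T)) (hBnn : ∀ s ∈ Ioc 0 T, 0 ≤ B s) :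
    ∀ t ∈ Icc (0:ℝ) T,
      ∫ s in Ioc (0:ℝ) t, B s * Real.exp (∫ τ in Ioc (0:ℝ) s, B τ)
        = Real.exp (∫ s in Ioc (0:ℝ) t, B s) - 1 := by
  intro t ht
  set u : ℝ → ℝ := fun s => ∫ τ in Ioc (0:ℝ) s, B τ with hu
  have hBt : IntegrableOn B (Ioc 0 t) := hB.mono_set (Ioc_subset_Ioc le_rfl ht.2)
  set f : ℕ → ℝ → ℝ := fun n s => B s * (u s ^ n / (n ! : ℝ)) with hf
  have hfint : ∀ n, IntegrableOn (f n) (Ioc 0 t) := by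
    intro n
    have e : f n = fun s => (B s * u s ^ n) / (n ! : ℝ) := by
      funext s; simp [hf, mul_div_assoc]
    rw [e]
    exact (Bun_int hB n ht).div_const _
  have hfI : ∀ n : ℕ, ∫ s in Ioc (0:ℝ) t, f n s = u t ^ (n+1) / (Nat.factorial (n+1) : ℝ) := by
    intro n
    have e1 : ∫ s in Ioc (0:ℝ) t, f n s = (∫ s in Ioc (0:ℝ) t, B s * u s ^ n) / n ! := by
      rw [← integral_div]
      apply setIntegral_congr_fun measurableSet_Ioc
      intro s _
      simp [hf, mul_div_assoc]
    rw [e1, In_eq hB hBnn n t ht]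
    rw [div_div]
    congr 1
    push_cast [Nat.factorial_succ]
    ring
  have hfnn : ∀ n, ∀ s ∈ Ioc (0:ℝ) t, 0 ≤ f n s := by
    intro n s hs
    have hsI : s ∈ Icc (0:ℝ) T := ⟨le_of_lt hs.1, hs.2.trans ht.2⟩
    have h1 : 0 ≤ B s := hBnn s (Ioc_subset_Ioc le_rfl ht.2 hs)
    have h2 : 0 ≤ u s := u_nonneg hBnn hsI
    positivity
  have hmeas : ∀ n, AEStronglyMeasurable (f n) (volume.restrict (Ioc 0 t)) := fun n =>
    (hfint n).aestronglyMeasurable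
  have hlint : ∑' n, ∫⁻ s in Ioc (0:ℝ) t, ‖f n s‖ₑ ≠ ⊤ := by
    have e2 : ∀ n : ℕ, ∫⁻ s in Ioc (0:ℝ) t, ‖f n s‖ₑ = ENNReal.ofReal (u t ^ (n+1) / (Nat.factorial (n+1) : ℝ)) := by
      intro n
      rw [← ofReal_integral_norm_eq_lintegral_enorm (hfint n)]
      congr 1
      rw [← hfI n]
      apply setIntegral_congr_fun measurableSet_Ioc
      intro s hs
      exact Real.norm_of_nonneg (hfnn n s hs)
    simp_rw [e2]
    have hsum : Summable (fun n : ℕ => u t ^ (n+1) / (Nat.factorial (n+1) : ℝ)) := by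
      have := Real.summable_pow_div_factorial (u t)
      exact (summable_nat_add_iff 1).mpr this
    have hut : 0 ≤ u t := u_nonneg hBnn ht
    rw [← ENNReal.ofReal_tsum_of_nonneg (fun n => by positivity) hsum]
    exact ENNReal.ofReal_ne_top
  have key := integral_tsum hmeas hlint
  have e3 : ∀ᵐ s ∂(volume.restrict (Ioc (0:ℝ) t)), (∑' n, f n s) = B s * Real.exp (u s) := by
    filter_upwards with s
    rw [exp_tsum (u s), ← tsum_mul_left]
  calc ∫ s in Ioc (0:ℝ) t, B s * Real.exp (u s)
      = ∫ s in Ioc (0:ℝ) t, (∑' n, f n s) := (integral_congr_ae e3).symm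
    _ = ∑' n, ∫ s in Ioc (0:ℝ) t, f n s := key
    _ = ∑' n, u t ^ (n+1) / (Nat.factorial (n+1) : ℝ) := by simp_rw [hfI]
    _ = Real.exp (u t) - 1 := exp_tsum_shift (u t)
end

section
variable {B g : ℝ → ℝ} {T : ℝ}

lemma Beu_int (hB : IntegrableOn B (Ioc 0 T)) {t : ℝ} (ht : t ∈ Icc (0:ℝ) T) :
    IntegrableOn (fun s => B s * Real.exp (∫ τ in Ioc (0:ℝ) s, B τ)) (Ioc 0 t) := by
  set C := ∫ τ in Ioc (0:ℝ) T, |B τ| with hC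
  have hBt : IntegrableOn B (Ioc 0 t) := hB.mono_set (Ioc_subset_Ioc le_rfl ht.2)
  apply Integrable.mono' (g := fun s => |B s| * Real.exp C)
  · exact hBt.abs.mul_const _
  · exact hBt.aestronglyMeasurable.mul
      ((Real.continuous_exp.comp_continuousOn
        ((u_contOn hB).mono (fun x hx => ⟨le_of_lt hx.1, hx.2.trans ht.2⟩))).aestronglyMeasurable
        measurableSet_Ioc)
  · filter_upwards [ae_restrict_mem measurableSet_Ioc] with s hs
    have hsI : s ∈ Icc (0:ℝ) T := ⟨le_of_lt hs.1, hs.2.trans ht.2⟩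
    rw [Real.norm_eq_abs, abs_mul, abs_of_pos (Real.exp_pos _)]
    have h1 := u_bound hB hsI
    have : Real.exp (∫ τ in Ioc (0:ℝ) s, B τ) ≤ Real.exp C :=
      Real.exp_le_exp.mpr ((le_abs_self _).trans h1)
    exact mul_le_mul_of_nonneg_left this (abs_nonneg _)

/-- Gronwall comparison lemma in integral form. -/
lemma gronwall_int (hT : 0 ≤ T) (Φ h : ℝ → ℝ) (c₀ : ℝ)
    (hB : IntegrableOn B (Ioc 0 T)) (hBnn : ∀ s ∈ Ioc 0 T, 0 ≤ B s)
    (hh : IntegrableOn h (Ioc 0 T))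
    (hΦcont : ContinuousOn Φ (Icc 0 T))
    (hineq : ∀ t ∈ Icc (0:ℝ) T, Φ t ≤ c₀ + ∫ s in Ioc (0:ℝ) t, (h s + B s * Φ s)) :
    ∀ t ∈ Icc (0:ℝ) T,
      Φ t ≤ Real.exp (∫ s in Ioc (0:ℝ) t, B s) *
        (c₀ + ∫ s in Ioc (0:ℝ) t, Real.exp (-(∫ τ in Ioc (0:ℝ) s, B τ)) * h s) := by
  set u : ℝ → ℝ := fun s => ∫ τ in Ioc (0:ℝ) s, B τ with hu
  have hTmem : T ∈ Icc (0:ℝ) T := right_mem_Icc.mpr hT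
  have hucont : ContinuousOn u (Icc 0 T) := u_contOn hB
  set g : ℝ → ℝ := fun s => Real.exp (-(u s)) * h s with hg
  have hgcont9 : ContinuousOn (fun s => Real.exp (-(u s))) (Icc 0 T) :=
    Real.continuous_exp.comp_continuousOn hucont.neg
  have hgint : IntegrableOn g (Ioc 0 T) := by
    apply Integrable.mono' (g := fun s => |h s|) hh.abs
    · exact ((hgcont9.mono Ioc_subset_Icc_self).aestronglyMeasurable
        measurableSet_Ioc).mul hh.aestronglyMeasurable
    · filter_upwards [ae_restrict_mem measurableSet_Ioc] with s hs
      have hsI : s ∈ Icc (0:ℝ) T := Ioc_subset_Icc_self hs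
      rw [Real.norm_eq_abs, abs_mul, abs_of_pos (Real.exp_pos _)]
      have h1 : Real.exp (-(u s)) ≤ 1 := by
        rw [Real.exp_le_one_iff]
        simp only [neg_nonpos]
        exact u_nonneg hBnn hsI
      nlinarith [abs_nonneg (h s), Real.exp_pos (-(u s))]
  set G : ℝ → ℝ := fun t => ∫ s in Ioc (0:ℝ) t, g s with hG
  have hGcont : ContinuousOn G (Icc 0 T) :=
    intervalIntegral.continuousOn_primitive ((integrableOn_Icc_iff_integrableOn_Ioc).mpr hgint)
  set v : ℝ → ℝ := fun t => c₀ + G t with hv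
  have hvcont : ContinuousOn v (Icc 0 T) := continuousOn_const.add hGcont
  set M : ℝ → ℝ := fun t => Real.exp (u t) * v t with hM
  have hMcont : ContinuousOn M (Icc 0 T) :=
    (Real.continuous_exp.comp_continuousOn hucont).mul hvcont
  obtain ⟨CM, hCM⟩ := (isCompact_Icc).exists_bound_of_continuousOn hMcont
  obtain ⟨CΦ, hCΦ⟩ := (isCompact_Icc).exists_bound_of_continuousOn hΦcont
  have hBf_int : ∀ (f : ℝ → ℝ) (Cf : ℝ), ContinuousOn f (Icc 0 T) →
      (∀ x ∈ Icc (0:ℝ) T, ‖f x‖ ≤ Cf) →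
      ∀ t ∈ Icc (0:ℝ) T, IntegrableOn (fun s => B s * f s) (Ioc 0 t) := by
    intro f Cf hfc hfb t ht
    have hBt : IntegrableOn B (Ioc 0 t) := hB.mono_set (Ioc_subset_Ioc le_rfl ht.2)
    apply Integrable.mono' (g := fun s => |B s| * |Cf|) (hBt.abs.mul_const _)
    · exact hBt.aestronglyMeasurable.mul
        (((hfc.mono (fun x hx => ⟨le_of_lt hx.1, hx.2.trans ht.2⟩))).aestronglyMeasurable
          measurableSet_Ioc)
    · filter_upwards [ae_restrict_mem measurableSet_Ioc] with s hs
      have hsI : s ∈ Icc (0:ℝ) T := ⟨le_of_lt hs.1, hs.2.trans ht.2⟩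
      rw [Real.norm_eq_abs, abs_mul]
      exact mul_le_mul_of_nonneg_left ((hfb s hsI).trans (le_abs_self _)) (abs_nonneg _)
  have hBM_int := hBf_int M CM hMcont hCM
  have hBΦ_int := hBf_int Φ CΦ hΦcont hCΦ
  have hBeuT : IntegrableOn (fun s => B s * Real.exp (u s)) (Ioc 0 T) := Beu_int hB hTmem
  -- supersolution identity
  have hMeq : ∀ t ∈ Icc (0:ℝ) T, M t = c₀ + ∫ s in Ioc (0:ℝ) t, (h s + B s * M s) := by
    intro t ht
    have hht : IntegrableOn h (Ioc 0 t) := hh.mono_set (Ioc_subset_Ioc le_rfl ht.2)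
    have hBeu : IntegrableOn (fun s => B s * Real.exp (u s)) (Ioc 0 t) := Beu_int hB ht
    have hgt : IntegrableOn g (Ioc 0 t) := hgint.mono_set (Ioc_subset_Ioc le_rfl ht.2)
    have hBeuG : IntegrableOn (fun s => (B s * Real.exp (u s)) * G s) (Ioc 0 t) := by
      obtain ⟨CG, hCG⟩ := (isCompact_Icc).exists_bound_of_continuousOn hGcont
      apply Integrable.mono' (g := fun s => |B s * Real.exp (u s)| * |CG|)
        (hBeu.abs.mul_const _)
      · exact hBeu.aestronglyMeasurable.mul
          (((hGcont.mono (fun x hx => ⟨le_of_lt hx.1, hx.2.trans ht.2⟩))).aestronglyMeasurable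
            measurableSet_Ioc)
      · filter_upwards [ae_restrict_mem measurableSet_Ioc] with s hs
        have hsI : s ∈ Icc (0:ℝ) T := ⟨le_of_lt hs.1, hs.2.trans ht.2⟩
        rw [Real.norm_eq_abs, abs_mul]
        exact mul_le_mul_of_nonneg_left ((hCG s hsI).trans (le_abs_self _)) (abs_nonneg _)
    have e1 : ∫ s in Ioc (0:ℝ) t, (h s + B s * M s)
        = (∫ s in Ioc (0:ℝ) t, h s) + ∫ s in Ioc (0:ℝ) t, B s * M s :=
      integral_add hht (hBM_int t ht)
    have e2 : ∀ s ∈ Ioc (0:ℝ) t, B s * M s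
        = c₀ * (B s * Real.exp (u s)) + (B s * Real.exp (u s)) * G s := by
      intro s _
      simp only [hM, hv]
      ring
    have e3 : ∫ s in Ioc (0:ℝ) t, B s * M s
        = c₀ * (∫ s in Ioc (0:ℝ) t, B s * Real.exp (u s))
          + ∫ s in Ioc (0:ℝ) t, (B s * Real.exp (u s)) * G s := by
      rw [setIntegral_congr_fun measurableSet_Ioc e2,
        integral_add (hBeu.const_mul _) hBeuG, integral_const_mul]
    have e4 : (∫ s in Ioc (0:ℝ) t, (B s * Real.exp (u s)) * G s)
        = ∫ τ in Ioc (0:ℝ) t, g τ * ∫ s in Ioc τ t, B s * Real.exp (u s) :=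
      swap_tri t (fun s => B s * Real.exp (u s)) g hBeu hgt
    have e5 : ∀ τ ∈ Ioc (0:ℝ) t, g τ * (∫ s in Ioc τ t, B s * Real.exp (u s))
        = Real.exp (u t) * g τ - h τ := by
      intro τ hτ
      have hτI : τ ∈ Icc (0:ℝ) T := ⟨le_of_lt hτ.1, hτ.2.trans ht.2⟩
      have hadd := ioc_add hBeuT (le_refl (0:ℝ)) (le_of_lt hτ.1) hτ.2 ht.2
      have i1 := I1_eq hB hBnn t ht
      have i2 := I1_eq hB hBnn τ hτI
      have e6 : ∫ s in Ioc τ t, B s * Real.exp (u s) = Real.exp (u t) - Real.exp (u τ) := by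
        have : ∫ s in Ioc (0:ℝ) t, B s * Real.exp (u s) = Real.exp (u t) - 1 := i1
        have h2 : ∫ s in Ioc (0:ℝ) τ, B s * Real.exp (u s) = Real.exp (u τ) - 1 := i2
        rw [this, h2] at hadd
        linarith
      rw [e6]
      have : g τ * Real.exp (u τ) = h τ := by
        simp only [hg]
        rw [mul_comm (Real.exp (-(u τ))) (h τ), mul_assoc, ← Real.exp_add]
        simp
      nlinarith [this]
    have e7 : (∫ τ in Ioc (0:ℝ) t, g τ * ∫ s in Ioc τ t, B s * Real.exp (u s))
        = Real.exp (u t) * G t - ∫ s in Ioc (0:ℝ) t, h s := by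
      rw [setIntegral_congr_fun measurableSet_Ioc e5,
        integral_sub (hgt.const_mul _) hht, integral_const_mul]
    rw [e1, e3, e4, e7, I1_eq hB hBnn t ht]
    simp only [hM, hv]
    ring
  -- comparison argument
  set w : ℝ → ℝ := fun s => Φ s - M s with hw
  have hwcont : ContinuousOn w (Icc 0 T) := hΦcont.sub hMcont
  have hwineq : ∀ t ∈ Icc (0:ℝ) T, w t ≤ ∫ s in Ioc (0:ℝ) t, B s * w s := by
    intro t ht
    have e1 : ∫ s in Ioc (0:ℝ) t, B s * w s
        = (∫ s in Ioc (0:ℝ) t, B s * Φ s) - ∫ s in Ioc (0:ℝ) t, B s * M s := by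
      rw [← integral_sub (hBΦ_int t ht) (hBM_int t ht)]
      apply setIntegral_congr_fun measurableSet_Ioc
      intro s _
      simp only [hw]; ring
    have hht : IntegrableOn h (Ioc 0 t) := hh.mono_set (Ioc_subset_Ioc le_rfl ht.2)
    have e2 : (∫ s in Ioc (0:ℝ) t, (h s + B s * Φ s))
        = (∫ s in Ioc (0:ℝ) t, h s) + ∫ s in Ioc (0:ℝ) t, B s * Φ s :=
      integral_add hht (hBΦ_int t ht)
    have e3 : (∫ s in Ioc (0:ℝ) t, (h s + B s * M s))
        = (∫ s in Ioc (0:ℝ) t, h s) + ∫ s in Ioc (0:ℝ) t, B s * M s :=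
      integral_add hht (hBM_int t ht)
    have h1 := hineq t ht
    have h2 := hMeq t ht
    simp only [hw]
    rw [e1]
    rw [e2] at h1
    rw [e3] at h2
    linarith
  have hBw_int : ∀ t ∈ Icc (0:ℝ) T, IntegrableOn (fun s => B s * w s) (Ioc 0 t) := by
    obtain ⟨Cw, hCw⟩ := (isCompact_Icc).exists_bound_of_continuousOn hwcont
    exact hBf_int w Cw hwcont hCw
  -- uniform continuity of u
  have hunif := (isCompact_Icc (a := (0:ℝ)) (b := T)).uniformContinuousOn_of_continuous hucont
  rw [Metric.uniformContinuousOn_iff] at hunif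
  obtain ⟨δ, hδpos, hδ⟩ := hunif (1/2) (by norm_num)
  have hδ' : ∀ x ∈ Icc (0:ℝ) T, ∀ y ∈ Icc (0:ℝ) T, |x - y| ≤ δ/2 → |u x - u y| ≤ 1/2 := by
    intro x hx y hy hle
    have : dist x y < δ := by
      rw [Real.dist_eq]
      linarith
    exact le_of_lt (hδ x hx y hy this)
  have claim : ∀ n : ℕ, ∀ t ∈ Icc (0:ℝ) T, t ≤ n * (δ/2) → w t ≤ 0 := by
    intro n
    induction n with
    | zero =>
      intro t ht htle
      have ht0 : t = 0 := le_antisymm (by simpa using htle) ht.1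
      have h1 := hwineq t ht
      rw [ht0] at h1 ⊢
      simpa using h1
    | succ n IH =>
      intro t ht htle
      set b := min T ((n+1 : ℕ) * (δ/2)) with hb
      have hb0 : 0 ≤ b := le_min hT (by positivity)
      have hbT : b ≤ T := min_le_left _ _
      have hJsub : Icc (0:ℝ) b ⊆ Icc (0:ℝ) T := Icc_subset_Icc le_rfl hbT
      have hJne : (w '' Icc (0:ℝ) b).Nonempty := ⟨w 0, ⟨0, ⟨le_rfl, hb0⟩, rfl⟩⟩
      have hbddJ : BddAbove (w '' Icc (0:ℝ) b) :=
        (isCompact_Icc.image_of_continuousOn (hwcont.mono hJsub)).bddAbove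
      set K := sSup (w '' Icc (0:ℝ) b) with hK
      have hKmem : ∀ s ∈ Icc (0:ℝ) b, w s ≤ K := fun s hs =>
        le_csSup hbddJ ⟨s, hs, rfl⟩
      have hmax0 : (0:ℝ) ≤ max K 0 := le_max_right _ _
      have hstep : ∀ s ∈ Icc (0:ℝ) b, w s ≤ max K 0 / 2 := by
        intro s hs
        set m := min s ((n : ℕ) * (δ/2)) with hm
        have hm0 : 0 ≤ m := le_min hs.1 (by positivity)
        have hms : m ≤ s := min_le_left _ _
        have hsT : s ∈ Icc (0:ℝ) T := hJsub hs
        have hmT : m ∈ Icc (0:ℝ) T := ⟨hm0, hms.trans hsT.2⟩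
        have hsplit := ioc_add (hBw_int T hTmem) (le_refl (0:ℝ)) hm0 hms hsT.2
        have h1 : w s ≤ ∫ τ in Ioc (0:ℝ) s, B τ * w τ := hwineq s hsT
        have h2 : (∫ τ in Ioc (0:ℝ) m, B τ * w τ) ≤ 0 := by
          apply setIntegral_nonpos measurableSet_Ioc
          · intro τ hτ
            have hτT : τ ∈ Icc (0:ℝ) T := ⟨le_of_lt hτ.1, hτ.2.trans hmT.2⟩
            have hwτ : w τ ≤ 0 := IH τ hτT (hτ.2.trans (min_le_right _ _))
            have hBτ : 0 ≤ B τ := hBnn τ (Ioc_subset_Ioc le_rfl hmT.2 hτ)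
            exact mul_nonpos_of_nonneg_of_nonpos hBτ hwτ
        have h3 : (∫ τ in Ioc m s, B τ * w τ) ≤ ∫ τ in Ioc m s, B τ * max K 0 := by
          apply setIntegral_mono_on
          · exact (hBw_int s hsT).mono_set (Ioc_subset_Ioc hm0 le_rfl)
          · exact ((hB.mono_set (Ioc_subset_Ioc hm0 hsT.2)).mul_const _)
          · exact measurableSet_Ioc
          · intro τ hτ
            have hτb : τ ∈ Icc (0:ℝ) b := ⟨hm0.trans (le_of_lt hτ.1), hτ.2.trans hs.2⟩
            have hBτ : 0 ≤ B τ := hBnn τ ⟨lt_of_le_of_lt hm0 hτ.1, hτ.2.trans hsT.2⟩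
            exact mul_le_mul_of_nonneg_left ((hKmem τ hτb).trans (le_max_left _ _)) hBτ
        have h4 : (∫ τ in Ioc m s, B τ * max K 0) = (u s - u m) * max K 0 := by
          rw [integral_mul_const]
          congr 1
          have := ioc_add hB (le_refl (0:ℝ)) hm0 hms hsT.2
          simp only [hu]
          linarith
        have h5 : u s - u m ≤ 1/2 := by
          have hdist : |s - m| ≤ δ/2 := by
            rw [abs_of_nonneg (by linarith)]
            rcases le_total s ((n : ℕ) * (δ/2)) with hc | hc
            · rw [hm, min_eq_left hc]; linarith
            · rw [hm, min_eq_right hc]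
              have hsb : s ≤ ((n:ℕ)+1) * (δ/2) := by
                have := hs.2.trans (min_le_right T _)
                push_cast at this ⊢
                linarith
              linarith
          have := hδ' s hsT m hmT hdist
          calc u s - u m ≤ |u s - u m| := le_abs_self _
            _ ≤ 1/2 := this
        have h6 : (u s - u m) * max K 0 ≤ (1/2) * max K 0 :=
          mul_le_mul_of_nonneg_right h5 hmax0
        have hsplit' : (∫ τ in Ioc (0:ℝ) s, B τ * w τ)
            = (∫ τ in Ioc (0:ℝ) m, B τ * w τ) + ∫ τ in Ioc m s, B τ * w τ := hsplit
        have hc1 : w s ≤ (∫ τ in Ioc (0:ℝ) m, B τ * w τ) + ∫ τ in Ioc m s, B τ * w τ := by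
          rw [← hsplit']; exact h1
        have hc2 : (∫ τ in Ioc m s, B τ * w τ) ≤ (1/2) * max K 0 := by
          refine h3.trans ?_
          rw [h4]; exact h6
        calc w s ≤ 0 + (1/2) * max K 0 := hc1.trans (add_le_add h2 hc2)
          _ = max K 0 / 2 := by ring
      have hKle : K ≤ max K 0 / 2 := csSup_le hJne (by rintro x ⟨s, hs, rfl⟩; exact hstep s hs)
      have hK0 : K ≤ 0 := by
        rcases le_or_gt K 0 with hc | hc
        · exact hc
        · rw [max_eq_left hc.le] at hKle; linarith
      have htb : t ∈ Icc (0:ℝ) b := ⟨ht.1, le_min ht.2 (by push_cast at htle ⊢; linarith)⟩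
      exact (hKmem t htb).trans hK0
  intro t ht
  have hδ2 : 0 < δ/2 := by linarith
  obtain ⟨n, hn⟩ := exists_nat_ge (T / (δ/2))
  have hTn : T ≤ n * (δ/2) := by
    rw [div_le_iff₀ hδ2] at hn
    linarith
  have hwt := claim n t ht (ht.2.trans hTn)
  simp only [hw] at hwt
  have hfin : Φ t ≤ M t := by linarith
  simpa only [hM, hv, hG, hg, hu] using hfin
end


/-- Logarithmic Gronwall inequality: from
`X' + Y ≤ A X + B X log(1+Y)` with `A ∈ L¹(0,T)` and `B ∈ L²(0,T)` one obtains
`X t ≤ (1 + X 0) ^ exp(∫₀ᵗ B) · exp(∫₀ᵗ exp(∫ₛᵗ B)(A s + B s²) ds)`. -/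
theorem stmt2 (T : ℝ) (hT : 0 < T) (X Y A B X' : ℝ → ℝ)
    (hXnn : ∀ t ∈ Set.Icc (0:ℝ) T, 0 ≤ X t)
    (hYnn : ∀ t ∈ Set.Icc (0:ℝ) T, 0 ≤ Y t)
    (hAnn : ∀ t ∈ Set.Icc (0:ℝ) T, 0 ≤ A t)
    (hBnn : ∀ t ∈ Set.Icc (0:ℝ) T, 0 ≤ B t)
    (hderiv : ∀ t ∈ Set.Icc (0:ℝ) T, HasDerivAt X (X' t) t)
    (hX'cont : ContinuousOn X' (Set.Icc 0 T))
    (hAint : IntegrableOn A (Set.Ioc 0 T))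
    (hBint : IntegrableOn (fun t => (B t) ^ 2) (Set.Ioc 0 T))
    (hineq : ∀ t ∈ Set.Icc (0:ℝ) T,
      X' t + Y t ≤ A t * X t + B t * X t * Real.log (1 + Y t)) :
    ∀ t ∈ Set.Icc (0:ℝ) T,
      X t ≤ (1 + X 0) ^ Real.exp (∫ s in (0:ℝ)..t, B s) *
        Real.exp (∫ s in (0:ℝ)..t, Real.exp (∫ τ in s..t, B τ) * (A s + (B s) ^ 2)) := by
  intro t ht
  have hT0 : (0:ℝ) ≤ T := hT.le
  have hBnn' : ∀ s ∈ Ioc (0:ℝ) T, 0 ≤ B s := fun s hs => hBnn s (Ioc_subset_Icc_self hs)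
  have hBsm : AEStronglyMeasurable B (volume.restrict (Ioc 0 T)) := by
    have h1 := hBint.aestronglyMeasurable
    have h2 : AEStronglyMeasurable (fun s => Real.sqrt (B s ^ 2)) (volume.restrict (Ioc 0 T)) :=
      Real.continuous_sqrt.comp_aestronglyMeasurable h1
    apply h2.congr
    filter_upwards [ae_restrict_mem measurableSet_Ioc] with s hs
    exact Real.sqrt_sq (hBnn' s hs)
  have hB1 : IntegrableOn B (Ioc 0 T) := by
    apply Integrable.mono' (g := fun s => 1 + B s ^ 2)
    · exact (integrableOn_const measure_Ioc_lt_top.ne).add hBint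
    · exact hBsm
    · filter_upwards [ae_restrict_mem measurableSet_Ioc] with s hs
      rw [Real.norm_eq_abs, abs_of_nonneg (hBnn' s hs)]
      nlinarith [hBnn' s hs]
  set Z : ℝ → ℝ := fun s => Real.log (1 + X s) with hZ
  have hXpos : ∀ s ∈ Icc (0:ℝ) T, 0 < 1 + X s := fun s hs => by linarith [hXnn s hs]
  have hXc : ContinuousOn X (Icc 0 T) := fun s hs =>
    ((hderiv s hs).continuousAt).continuousWithinAt
  have hZc : ContinuousOn Z (Icc 0 T) :=
    ContinuousOn.log (continuousOn_const.add hXc) (fun s hs => ne_of_gt (hXpos s hs))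
  have hZd : ∀ s ∈ Icc (0:ℝ) T, HasDerivAt Z (X' s / (1 + X s)) s := by
    intro s hs
    have h1 : HasDerivAt (fun r => 1 + X r) (X' s) s := (hderiv s hs).const_add 1
    exact h1.log (ne_of_gt (hXpos s hs))
  have hZ'le : ∀ s ∈ Icc (0:ℝ) T, X' s / (1 + X s) ≤ (A s + B s ^ 2) + B s * Z s := by
    intro s hs
    have hx := hXnn s hs; have hy := hYnn s hs; have ha := hAnn s hs; have hb := hBnn s hs
    have hP := hXpos s hs
    have key := log_key (B s * X s) (Y s) (mul_nonneg hb hx) hy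
    have h1 : X' s ≤ A s * X s + B s * X s * Real.log (1 + B s * X s) := by
      have := hineq s hs; nlinarith [key]
    have h2 : Real.log (1 + B s * X s) ≤ B s + Z s := by
      have l1 : Real.log (1 + B s * X s) ≤ Real.log ((1 + B s) * (1 + X s)) :=
        Real.log_le_log (by nlinarith) (by nlinarith)
      rw [Real.log_mul (by nlinarith) (ne_of_gt hP)] at l1
      have l2 : Real.log (1 + B s) ≤ B s := by
        have := Real.log_le_sub_one_of_pos (show (0:ℝ) < 1 + B s by nlinarith)
        linarith
      simp only [hZ]
      linarith
    have hZnn : 0 ≤ Z s := Real.log_nonneg (by simp only [hZ] at *; linarith)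
    rw [div_le_iff₀ hP]
    have h3 : (0:ℝ) ≤ B s * X s := mul_nonneg hb hx
    have h4 : B s * X s * Real.log (1 + B s * X s) ≤ B s * X s * (B s + Z s) :=
      mul_le_mul_of_nonneg_left h2 h3
    have h5 : X' s ≤ A s * X s + B s * X s * (B s + Z s) := by linarith
    nlinarith [h5, ha, hb, hx, hZnn, mul_nonneg hb hZnn, mul_nonneg ha hx, sq_nonneg (B s)]
  have hh_int : IntegrableOn (fun s => A s + B s ^ 2) (Ioc 0 T) := hAint.add hBint
  obtain ⟨CZ, hCZ⟩ := isCompact_Icc.exists_bound_of_continuousOn hZc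
  have hBZ_int : IntegrableOn (fun s => B s * Z s) (Ioc 0 T) := by
    apply Integrable.mono' (g := fun s => |B s| * |CZ|) (hB1.abs.mul_const _)
    · exact hBsm.mul ((hZc.mono Ioc_subset_Icc_self).aestronglyMeasurable measurableSet_Ioc)
    · filter_upwards [ae_restrict_mem measurableSet_Ioc] with s hs
      rw [Real.norm_eq_abs, abs_mul]
      have := (hCZ s (Ioc_subset_Icc_self hs)).trans (le_abs_self _)
      rw [Real.norm_eq_abs] at this
      exact mul_le_mul_of_nonneg_left this (abs_nonneg _)
  have hgron : ∀ r ∈ Icc (0:ℝ) T,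
      Z r ≤ Z 0 + ∫ s in Ioc (0:ℝ) r, ((A s + B s ^ 2) + B s * Z s) := by
    intro r hr
    have hsub : Icc (0:ℝ) r ⊆ Icc (0:ℝ) T := Icc_subset_Icc le_rfl hr.2
    have hZ'c : ContinuousOn (fun s => X' s / (1 + X s)) (Icc 0 T) :=
      hX'cont.div (continuousOn_const.add hXc) (fun s hs => ne_of_gt (hXpos s hs))
    have hZ'int : IntervalIntegrable (fun s => X' s / (1 + X s)) volume 0 r :=
      ContinuousOn.intervalIntegrable_of_Icc hr.1 (hZ'c.mono hsub)
    have hFTC := intervalIntegral.integral_eq_sub_of_hasDerivAt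
      (f := Z) (f' := fun s => X' s / (1 + X s))
      (fun s hs => hZd s (hsub (by rwa [uIcc_of_le hr.1] at hs))) hZ'int
    have hsum : IntegrableOn (fun s => (A s + B s ^ 2) + B s * Z s) (Ioc 0 T) :=
      hh_int.add hBZ_int
    have hg2int : IntervalIntegrable (fun s => (A s + B s ^ 2) + B s * Z s) volume 0 r :=
      (intervalIntegrable_iff_integrableOn_Ioc_of_le hr.1).mpr
        (hsum.mono_set (Ioc_subset_Ioc le_rfl hr.2))
    have hmono := intervalIntegral.integral_mono_on hr.1 hZ'int hg2int
      (fun s hs => hZ'le s (hsub hs))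
    rw [hFTC, intervalIntegral.integral_of_le hr.1] at hmono
    linarith
  have hgr := gronwall_int hT0 Z (fun s => A s + B s ^ 2) (Z 0) hB1 hBnn' hh_int hZc hgron t ht
  have hBiv : ∀ a b : ℝ, 0 ≤ a → a ≤ b → b ≤ T → IntervalIntegrable B volume a b :=
    fun a b ha hab hbT => (intervalIntegrable_iff_integrableOn_Ioc_of_le hab).mpr
      (hB1.mono_set (Ioc_subset_Ioc ha hbT))
  have e0 : (∫ s in (0:ℝ)..t, B s) = ∫ s in Ioc (0:ℝ) t, B s :=
    intervalIntegral.integral_of_le ht.1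
  have eiv : ∀ s ∈ Icc (0:ℝ) t, (∫ τ in s..t, B τ)
      = (∫ τ in Ioc (0:ℝ) t, B τ) - ∫ τ in Ioc (0:ℝ) s, B τ := by
    intro s hs
    have h1 := intervalIntegral.integral_add_adjacent_intervals
      (hBiv 0 s le_rfl hs.1 (hs.2.trans ht.2)) (hBiv s t hs.1 hs.2 ht.2)
    rw [intervalIntegral.integral_of_le hs.1, intervalIntegral.integral_of_le ht.1] at h1
    linarith
  have efac : (∫ s in (0:ℝ)..t, Real.exp (∫ τ in s..t, B τ) * (A s + B s ^ 2))
      = Real.exp (∫ τ in Ioc (0:ℝ) t, B τ)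
        * ∫ s in Ioc (0:ℝ) t, Real.exp (-(∫ τ in Ioc (0:ℝ) s, B τ)) * (A s + B s ^ 2) := by
    rw [intervalIntegral.integral_of_le ht.1, ← integral_const_mul]
    apply setIntegral_congr_fun measurableSet_Ioc
    intro s hs
    dsimp only
    rw [eiv s ⟨le_of_lt hs.1, hs.2⟩, sub_eq_add_neg, Real.exp_add]
    ring
  have hpos0 : (0:ℝ) < 1 + X 0 := hXpos 0 (left_mem_Icc.mpr hT0)
  have erpow : (1 + X 0) ^ Real.exp (∫ s in (0:ℝ)..t, B s)
      = Real.exp (Real.exp (∫ τ in Ioc (0:ℝ) t, B τ) * Z 0) := by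
    rw [e0, Real.rpow_def_of_pos hpos0]
    congr 1
    simp only [hZ]
    ring
  calc X t ≤ Real.exp (Z t) := by
        have he : Real.exp (Z t) = 1 + X t := by
          simp only [hZ]; exact Real.exp_log (hXpos t ht)
        linarith
    _ ≤ Real.exp (Real.exp (∫ τ in Ioc (0:ℝ) t, B τ)
          * (Z 0 + ∫ s in Ioc (0:ℝ) t, Real.exp (-(∫ τ in Ioc (0:ℝ) s, B τ)) * (A s + B s ^ 2))) :=
        Real.exp_le_exp.mpr hgr
    _ = (1 + X 0) ^ Real.exp (∫ s in (0:ℝ)..t, B s) *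
        Real.exp (∫ s in (0:ℝ)..t, Real.exp (∫ τ in s..t, B τ) * (A s + (B s) ^ 2)) := by
        rw [erpow, efac, ← Real.exp_add]
        congr 1
        ring
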